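/- arXiv:1906.01519 — 5 statements merged into one kernel-verified Lean document; each statement's English description precedes it below -/
import Mathlib

section
/- Given a distributive law λ : TF ⇒ FT of a monad T over an endofunctor F, if (Ω, ω) is a final F-coalgebra, then Ω carries an Eilenberg–Moore T-algebra structure α : TΩ → Ω, defined as the unique coalgebra morphism from the F-coalgebra (TΩ, Fα' where α' = λ_Ω ∘ Tω) to (Ω, ω), and (Ω, α, ω) is a λ-bialgebra. -/
/-!
A distributive law `λ : TF ⇒ FT` lifts `T` to the category of `F`-coalgebras, sending `(X, β)` to
`(TX, λ_X ∘ Tβ)`; the unit and multiplication axioms of `λ` say exactly that `η` and `μ` are then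
coalgebra morphisms. Taking `α` to be the unique coalgebra morphism from the lift of the final
coalgebra `(Ω, ω)` to itself, both sides of each Eilenberg–Moore law are coalgebra morphisms into
the final coalgebra, hence agree.
-/

open CategoryTheory Limits Endofunctor

namespace CategoryTheory.Endofunctor.Coalgebra

variable {C : Type*} [Category C] {F : C ⥤ C}

noncomputable def isTerminalOfExistsUnique (Ω : Coalgebra F)
    (hfinal : ∀ (Y : C) (b : Y ⟶ F.obj Y), ∃! h : Y ⟶ Ω.V, b ≫ F.map h = h ≫ Ω.str) :
    IsTerminal Ω :=
  IsTerminal.ofUniqueHom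
    (fun A ↦ { f := (hfinal A.V A.str).choose, h := (hfinal A.V A.str).choose_spec.1 })
    (fun A m ↦ Hom.ext ((hfinal A.V A.str).choose_spec.2 m.f m.h))

section Lift

variable {T : C ⥤ C} (lam : F ⋙ T ⟶ T ⋙ F)

def liftOfDistribLaw : Coalgebra F ⥤ Coalgebra F where
  obj A := ⟨T.obj A.V, T.map A.str ≫ lam.app A.V⟩
  map f :=
    { f := T.map f.f
      h := by
        have hlam := lam.naturality f.f
        dsimp at hlam
        simp only [Category.assoc, ← hlam, ← T.map_comp_assoc, Hom.h] }

end Lift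

section Monad

variable (T : Monad C) (lam : F ⋙ T.toFunctor ⟶ T.toFunctor ⋙ F)

def unitHomOfDistribLaw
    (hunit : ∀ X : C, T.η.app (F.obj X) ≫ lam.app X = F.map (T.η.app X)) (A : Coalgebra F) :
    A ⟶ (liftOfDistribLaw lam).obj A where
  f := T.η.app A.V
  h := by
    have hη := T.η.naturality_assoc A.str (lam.app A.V)
    rw [hunit] at hη
    exact hη

def multHomOfDistribLaw
    (hmul : ∀ X : C, T.μ.app (F.obj X) ≫ lam.app X =
      T.map (lam.app X) ≫ lam.app (T.obj X) ≫ F.map (T.μ.app X)) (A : Coalgebra F) :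
    (liftOfDistribLaw lam).obj ((liftOfDistribLaw lam).obj A) ⟶ (liftOfDistribLaw lam).obj A where
  f := T.μ.app A.V
  h := by
    have hμ := T.μ.naturality_assoc A.str (lam.app A.V)
    rw [hmul, Functor.comp_map, ← T.map_comp_assoc] at hμ
    exact (Category.assoc _ _ _).trans hμ

end Monad

end CategoryTheory.Endofunctor.Coalgebra

/-- Given a distributive law `λ : TF ⇒ FT` of a monad `T` over an endofunctor `F`
and a final `F`-coalgebra `(Ω, ω)`, the object `Ω` carries an Eilenberg–Moore
`T`-algebra structure `α`, namely the unique coalgebra morphism from the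
`F`-coalgebra `(TΩ, λ_Ω ∘ Tω)` to `(Ω, ω)`, and `(Ω, α, ω)` is a `λ`-bialgebra. -/
theorem final_coalgebra_carries_EM_algebra
    {C : Type*} [Category C] (T : Monad C) (F : C ⥤ C)
    (lam : F ⋙ T.toFunctor ⟶ T.toFunctor ⋙ F)
    (hunit : ∀ X : C, T.η.app (F.obj X) ≫ lam.app X = F.map (T.η.app X))
    (hmul : ∀ X : C, T.μ.app (F.obj X) ≫ lam.app X =
      T.toFunctor.map (lam.app X) ≫ lam.app (T.toFunctor.obj X) ≫ F.map (T.μ.app X))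
    (Ω : C) (ω : Ω ⟶ F.obj Ω)
    (hfinal : ∀ (Y : C) (b : Y ⟶ F.obj Y), ∃! h : Y ⟶ Ω, b ≫ F.map h = h ≫ ω) :
    ∃ α : T.toFunctor.obj Ω ⟶ Ω,
      ((T.toFunctor.map ω ≫ lam.app Ω) ≫ F.map α = α ≫ ω) ∧
      (T.η.app Ω ≫ α = 𝟙 Ω) ∧
      (T.μ.app Ω ≫ α = T.toFunctor.map α ≫ α) := by
  let Ωc : Coalgebra F := ⟨Ω, ω⟩
  have hΩ : IsTerminal Ωc := Coalgebra.isTerminalOfExistsUnique Ωc hfinal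
  let L := Coalgebra.liftOfDistribLaw lam
  let α : L.obj Ωc ⟶ Ωc := hΩ.from _
  refine ⟨α.f, α.h, ?_, ?_⟩
  · exact congrArg Coalgebra.Hom.f
      (hΩ.hom_ext (Coalgebra.unitHomOfDistribLaw T lam hunit Ωc ≫ α) (𝟙 _))
  · exact congrArg Coalgebra.Hom.f
      (hΩ.hom_ext (Coalgebra.multHomOfDistribLaw T lam hmul Ωc ≫ α) (L.map α ≫ α))
end

section
/- If λ : TF ⇒ FT is a distributive law of a monad T over an endofunctor F, then the unique morphism from any λ-bialgebra (TX, μ_X, β♯) to the final λ-bialgebra on the final F-coalgebra Ω is simultaneously a T-algebra homomorphism and an F-coalgebra homomorphism; hence the behaviour map ⟦·⟧ : TX → Ω is compositional, i.e., ⟦·⟧ ∘ μ_X = α_Ω ∘ T⟦·⟧ where α_Ω is the induced algebra structure on Ω. -/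
/-! Both `μ_X ≫ ⟦·⟧` and `T⟦·⟧ ≫ α_Ω` are `F`-coalgebra morphisms out of `(TTX, Tβ♯ ≫ λ_{TX})`
into the final coalgebra `(Ω, ω)`, hence equal. For the first, `μ_X` is a coalgebra morphism
`(TTX, Tβ♯ ≫ λ_{TX}) ⟶ (TX, β♯)` by the multiplication axiom of `λ` and associativity of `μ`.
For the second, `λ` lifts `T` to a functor on `F`-coalgebras, which sends `⟦·⟧` to a coalgebra
morphism `T⟦·⟧`, and `α_Ω` is a coalgebra morphism out of the lifted final coalgebra. -/

open CategoryTheory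

namespace CategoryTheory.Monad

open Endofunctor

variable {C : Type*} [Category C] (T : Monad C) {F : C ⥤ C}
  (lam : F ⋙ T.toFunctor ⟶ T.toFunctor ⋙ F)

def liftCoalgebra : Coalgebra F ⥤ Coalgebra F where
  obj V := ⟨T.obj V.V, T.map V.str ≫ lam.app V.V⟩
  map {V W} f :=
    { f := T.map f.f
      h := by
        have hnat := lam.naturality f.f
        dsimp at hnat
        rw [Category.assoc, ← hnat, ← T.map_comp_assoc, f.h, T.map_comp_assoc] }

def sharp {X : C} (β : X ⟶ F.obj (T.obj X)) : T.obj X ⟶ F.obj (T.obj X) :=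
  T.map β ≫ lam.app (T.obj X) ≫ F.map (T.μ.app X)

theorem map_sharp_comp_lam_comp_map_μ
    (hmul : ∀ X : C, T.μ.app (F.obj X) ≫ lam.app X =
      T.map (lam.app X) ≫ lam.app (T.obj X) ≫ F.map (T.μ.app X))
    {X : C} (β : X ⟶ F.obj (T.obj X)) :
    (T.map (T.sharp lam β) ≫ lam.app (T.obj X)) ≫ F.map (T.μ.app X) =
      T.μ.app X ≫ T.sharp lam β := by
  have hnat : T.map (F.map (T.μ.app X)) ≫ lam.app (T.obj X) =
      lam.app (T.obj (T.obj X)) ≫ F.map (T.map (T.μ.app X)) :=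
    lam.naturality (T.μ.app X)
  simp only [sharp, Functor.map_comp, Category.assoc]
  rw [reassoc_of% hnat, ← F.map_comp, T.assoc, F.map_comp, reassoc_of% (hmul _).symm]
  exact T.μ.naturality_assoc β _

def sharpCoalgebra {X : C} (β : X ⟶ F.obj (T.obj X)) : Coalgebra F :=
  ⟨T.obj X, T.sharp lam β⟩

def μCoalgebraHom
    (hmul : ∀ X : C, T.μ.app (F.obj X) ≫ lam.app X =
      T.map (lam.app X) ≫ lam.app (T.obj X) ≫ F.map (T.μ.app X))
    {X : C} (β : X ⟶ F.obj (T.obj X)) :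
    (T.liftCoalgebra lam).obj (T.sharpCoalgebra lam β) ⟶ T.sharpCoalgebra lam β where
  f := T.μ.app X
  h := T.map_sharp_comp_lam_comp_map_μ lam hmul β

end CategoryTheory.Monad

namespace CategoryTheory.Endofunctor.Coalgebra

theorem hom_ext_of_existsUnique {C : Type*} [Category C] {F : C ⥤ C} {O : Coalgebra F}
    (hfinal : ∀ (Y : C) (b : Y ⟶ F.obj Y), ∃! h : Y ⟶ O.V, b ≫ F.map h = h ≫ O.str)
    {V : Coalgebra F} (f g : V ⟶ O) : f = g :=
  Hom.ext ((hfinal V.V V.str).unique f.h g.h)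

end CategoryTheory.Endofunctor.Coalgebra

theorem bialgebraic_semantics_compositional_general
    {C : Type*} [Category C] (T : Monad C) (F : C ⥤ C)
    (lam : F ⋙ T.toFunctor ⟶ T.toFunctor ⋙ F)
    (hmul : ∀ X : C, T.μ.app (F.obj X) ≫ lam.app X =
      T.toFunctor.map (lam.app X) ≫ lam.app (T.toFunctor.obj X) ≫ F.map (T.μ.app X))
    (Ω : C) (ω : Ω ⟶ F.obj Ω)
    (hfinal : ∀ (Y : C) (b : Y ⟶ F.obj Y), ∃! h : Y ⟶ Ω, b ≫ F.map h = h ≫ ω)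
    (αΩ : T.toFunctor.obj Ω ⟶ Ω)
    (hαΩ : (T.toFunctor.map ω ≫ lam.app Ω) ≫ F.map αΩ = αΩ ≫ ω)
    (X : C) (β : X ⟶ F.obj (T.toFunctor.obj X))
    (sem : T.toFunctor.obj X ⟶ Ω)
    (hsem : (T.toFunctor.map β ≫ lam.app (T.toFunctor.obj X) ≫ F.map (T.μ.app X)) ≫
        F.map sem = sem ≫ ω) :
    T.μ.app X ≫ sem = T.toFunctor.map sem ≫ αΩ := by
  let Ωc : Endofunctor.Coalgebra F := ⟨Ω, ω⟩
  let semHom : T.sharpCoalgebra lam β ⟶ Ωc := ⟨sem, hsem⟩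
  let αHom : (T.liftCoalgebra lam).obj Ωc ⟶ Ωc := ⟨αΩ, hαΩ⟩
  exact congrArg Endofunctor.Coalgebra.Hom.f <|
    Endofunctor.Coalgebra.hom_ext_of_existsUnique (O := Ωc) hfinal
      (T.μCoalgebraHom lam hmul β ≫ semHom) ((T.liftCoalgebra lam).map semHom ≫ αHom)

/-- Bialgebraic compositionality: given a distributive law `λ : TF ⇒ FT`, a final
`F`-coalgebra `(Ω, ω)` with induced algebra `α_Ω` (the unique coalgebra morphism
`TΩ ⟶ Ω`), a coalgebra `β : X ⟶ FTX` with lifting `β♯ := Fμ ∘ λ_{TX} ∘ Tβ`, and the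
unique coalgebra morphism `⟦·⟧ : (TX, β♯) ⟶ (Ω, ω)`, the behaviour map `⟦·⟧` is a
`T`-algebra homomorphism: `⟦·⟧ ∘ μ_X = α_Ω ∘ T⟦·⟧`. -/
theorem bialgebraic_semantics_compositional
    {C : Type*} [Category C] (T : Monad C) (F : C ⥤ C)
    (lam : F ⋙ T.toFunctor ⟶ T.toFunctor ⋙ F)
    (hunit : ∀ X : C, T.η.app (F.obj X) ≫ lam.app X = F.map (T.η.app X))
    (hmul : ∀ X : C, T.μ.app (F.obj X) ≫ lam.app X =
      T.toFunctor.map (lam.app X) ≫ lam.app (T.toFunctor.obj X) ≫ F.map (T.μ.app X))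
    (Ω : C) (ω : Ω ⟶ F.obj Ω)
    (hfinal : ∀ (Y : C) (b : Y ⟶ F.obj Y), ∃! h : Y ⟶ Ω, b ≫ F.map h = h ≫ ω)
    (αΩ : T.toFunctor.obj Ω ⟶ Ω)
    (hαΩ : (T.toFunctor.map ω ≫ lam.app Ω) ≫ F.map αΩ = αΩ ≫ ω)
    (X : C) (β : X ⟶ F.obj (T.toFunctor.obj X))
    (sem : T.toFunctor.obj X ⟶ Ω)
    (hsem : (T.toFunctor.map β ≫ lam.app (T.toFunctor.obj X) ≫ F.map (T.μ.app X)) ≫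
        F.map sem = sem ≫ ω) :
    T.μ.app X ≫ sem = T.toFunctor.map sem ≫ αΩ :=
  bialgebraic_semantics_compositional_general T F lam hmul Ω ω hfinal αΩ hαΩ X β sem hsem
end

section
/- For an endofunctor F on a category C with binary coproducts such that for every object X an initial (X + F)-algebra F†X exists, the assignment X ↦ F†X extends to a monad (F†, η, μ), where η_X : X → F†X is the first component of the initial algebra structure [η_X, κ_X] : X + F(F†X) → F†X, and μ_X is the unique (F†X + F)-algebra morphism from the initial one to (F†X, [id, κ_X]). -/
/-!
Write `⦅a, k⦆ : F†X ⟶ A` for the unique morphism with `η ≫ ⦅a, k⦆ = a` and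
`κ ≫ ⦅a, k⦆ = F ⦅a, k⦆ ≫ k`. Uniqueness gives the fusion law `⦅a, k⦆ ≫ g = ⦅a ≫ g, l⦆` for every
`g` with `k ≫ g = F g ≫ l`. Both `F† f = ⦅f ≫ η, κ⦆` and `μ = ⦅𝟙, κ⦆` are such `g` between the
`κ`-structures, so each side of every functor and monad law is a fold `⦅-, κ⦆`, and the law reduces
to an equation between the first arguments (with `⦅η, κ⦆ = 𝟙` for the identity laws), which follows
from the defining equations `η ≫ F† f = f ≫ η` and `η ≫ μ = 𝟙`.
-/

open CategoryTheory

universe v u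

/-- `(Fd X, [η X, κ X])` is an initial `(X + F)`-algebra for every `X`. -/
def IsInitialAlgebraFamily {C : Type u} [Category.{v} C] (F : C ⥤ C) (Fd : C → C)
    (η : ∀ X : C, X ⟶ Fd X) (κ : ∀ X : C, F.obj (Fd X) ⟶ Fd X) : Prop :=
  ∀ (X A : C) (a : X ⟶ A) (k : F.obj A ⟶ A),
    ∃! h : Fd X ⟶ A, η X ≫ h = a ∧ κ X ≫ h = F.map h ≫ k

namespace IsInitialAlgebraFamily

variable {C : Type u} [Category.{v} C] {F : C ⥤ C} {Fd : C → C}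
  {η : ∀ X : C, X ⟶ Fd X} {κ : ∀ X : C, F.obj (Fd X) ⟶ Fd X}
  (hinit : IsInitialAlgebraFamily F Fd η κ)

noncomputable def lift {X A : C} (a : X ⟶ A) (k : F.obj A ⟶ A) : Fd X ⟶ A :=
  (hinit X A a k).exists.choose

theorem eta_lift {X A : C} (a : X ⟶ A) (k : F.obj A ⟶ A) : η X ≫ hinit.lift a k = a :=
  (hinit X A a k).exists.choose_spec.1

theorem kappa_lift {X A : C} (a : X ⟶ A) (k : F.obj A ⟶ A) :
    κ X ≫ hinit.lift a k = F.map (hinit.lift a k) ≫ k :=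
  (hinit X A a k).exists.choose_spec.2

theorem lift_unique {X A : C} {a : X ⟶ A} {k : F.obj A ⟶ A} {h : Fd X ⟶ A}
    (ha : η X ≫ h = a) (hk : κ X ≫ h = F.map h ≫ k) : h = hinit.lift a k :=
  (hinit X A a k).unique ⟨ha, hk⟩ ⟨hinit.eta_lift a k, hinit.kappa_lift a k⟩

theorem lift_eta_kappa (X : C) : hinit.lift (η X) (κ X) = 𝟙 (Fd X) :=
  (hinit.lift_unique (Category.comp_id _) (by simp)).symm

theorem lift_comp {X A B : C} (a : X ⟶ A) {k : F.obj A ⟶ A} {l : F.obj B ⟶ B} {g : A ⟶ B}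
    (hg : k ≫ g = F.map g ≫ l) : hinit.lift a k ≫ g = hinit.lift (a ≫ g) l :=
  hinit.lift_unique (by rw [← Category.assoc, eta_lift]) (by
    rw [← Category.assoc, kappa_lift, Category.assoc, hg, ← Category.assoc, ← F.map_comp])

noncomputable def map {X Y : C} (f : X ⟶ Y) : Fd X ⟶ Fd Y :=
  hinit.lift (f ≫ η Y) (κ Y)

noncomputable def mu (X : C) : Fd (Fd X) ⟶ Fd X :=
  hinit.lift (𝟙 (Fd X)) (κ X)

theorem eta_map {X Y : C} (f : X ⟶ Y) : η X ≫ hinit.map f = f ≫ η Y :=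
  hinit.eta_lift _ _

theorem kappa_map {X Y : C} (f : X ⟶ Y) : κ X ≫ hinit.map f = F.map (hinit.map f) ≫ κ Y :=
  hinit.kappa_lift _ _

theorem eta_mu (X : C) : η (Fd X) ≫ hinit.mu X = 𝟙 (Fd X) :=
  hinit.eta_lift _ _

theorem kappa_mu (X : C) : κ (Fd X) ≫ hinit.mu X = F.map (hinit.mu X) ≫ κ X :=
  hinit.kappa_lift _ _

theorem map_id (X : C) : hinit.map (𝟙 X) = 𝟙 (Fd X) := by
  rw [map, Category.id_comp, lift_eta_kappa]

theorem map_comp {X Y Z : C} (f : X ⟶ Y) (g : Y ⟶ Z) :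
    hinit.map (f ≫ g) = hinit.map f ≫ hinit.map g := by
  rw [map, map, lift_comp _ _ (hinit.kappa_map g)]
  simp only [Category.assoc, eta_map]

theorem map_map_mu {X Y : C} (f : X ⟶ Y) :
    hinit.map (hinit.map f) ≫ hinit.mu Y = hinit.mu X ≫ hinit.map f := by
  conv_lhs => rw [map, lift_comp _ _ (hinit.kappa_mu Y), Category.assoc, eta_mu, Category.comp_id]
  rw [mu, lift_comp _ _ (hinit.kappa_map f), Category.id_comp]

theorem map_eta_mu (X : C) : hinit.map (η X) ≫ hinit.mu X = 𝟙 (Fd X) := by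
  rw [map, lift_comp _ _ (hinit.kappa_mu X), Category.assoc, eta_mu, Category.comp_id,
    lift_eta_kappa]

theorem map_mu_mu (X : C) :
    hinit.map (hinit.mu X) ≫ hinit.mu X = hinit.mu (Fd X) ≫ hinit.mu X := by
  conv_lhs => rw [map, lift_comp _ _ (hinit.kappa_mu X), Category.assoc, eta_mu, Category.comp_id]
  conv_rhs => rw [mu, lift_comp _ _ (hinit.kappa_mu X), Category.id_comp]

end IsInitialAlgebraFamily

/-- The free monad on an endofunctor. If for each object `X` there is an initial
`(X + F)`-algebra `(F†X, [η_X, κ_X])` (expressed here via its universal property),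
then `X ↦ F†X` extends to a monad: there is a functorial action on morphisms and a
multiplication `μ` (the unique algebra morphism from the initial `(F†X + F)`-algebra
to `(F†X, [id, κ_X])`) satisfying the monad laws with unit `η`. -/
theorem free_monad_of_initial_algebras
    {C : Type*} [Category C] (F : C ⥤ C)
    (Fd : C → C) (η : ∀ X : C, X ⟶ Fd X) (κ : ∀ X : C, F.obj (Fd X) ⟶ Fd X)
    (hinit : ∀ (X A : C) (a : X ⟶ A) (k : F.obj A ⟶ A),
      ∃! h : Fd X ⟶ A, η X ≫ h = a ∧ κ X ≫ h = F.map h ≫ k) :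
    ∃ (map : ∀ X Y : C, (X ⟶ Y) → (Fd X ⟶ Fd Y)) (μ : ∀ X : C, Fd (Fd X) ⟶ Fd X),
      -- defining property of the functorial action (naturality of η and κ)
      (∀ (X Y : C) (f : X ⟶ Y),
        η X ≫ map X Y f = f ≫ η Y ∧ κ X ≫ map X Y f = F.map (map X Y f) ≫ κ Y) ∧
      -- defining property of μ: the unique algebra morphism to (F†X, [id, κ_X])
      (∀ X : C, η (Fd X) ≫ μ X = 𝟙 (Fd X) ∧ κ (Fd X) ≫ μ X = F.map (μ X) ≫ κ X) ∧
      -- functoriality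
      (∀ X : C, map X X (𝟙 X) = 𝟙 (Fd X)) ∧
      (∀ (X Y Z : C) (f : X ⟶ Y) (g : Y ⟶ Z),
        map X Z (f ≫ g) = map X Y f ≫ map Y Z g) ∧
      -- naturality of μ
      (∀ (X Y : C) (f : X ⟶ Y),
        map (Fd X) (Fd Y) (map X Y f) ≫ μ Y = μ X ≫ map X Y f) ∧
      -- monad unit laws and associativity
      (∀ X : C, map X (Fd X) (η X) ≫ μ X = 𝟙 (Fd X)) ∧
      (∀ X : C, η (Fd X) ≫ μ X = 𝟙 (Fd X)) ∧
      (∀ X : C, map (Fd (Fd X)) (Fd X) (μ X) ≫ μ X = μ (Fd X) ≫ μ X) := by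
  have h : IsInitialAlgebraFamily F Fd η κ := hinit
  exact ⟨fun _ _ f => h.map f, h.mu,
    fun _ _ f => ⟨h.eta_map f, h.kappa_map f⟩, fun X => ⟨h.eta_mu X, h.kappa_mu X⟩,
    h.map_id, fun _ _ _ => h.map_comp, fun _ _ => h.map_map_mu, h.map_eta_mu, h.eta_mu,
    h.map_mu_mu⟩
end

section
/- Given GSOS specifications λ₁ : S₁F ⇒ F S₁† and λ₂ : S₂F ⇒ F S₂† for endofunctors S₁, S₂, F on a category with coproducts and free monads, there is a GSOS specification λ₁·λ₂ : (S₁+S₂)F ⇒ F(S₁+S₂)†, obtained via the canonical monad morphisms γᵢ : Sᵢ† ⇒ (S₁+S₂)† (induced by initiality of free-monad algebras) and the copairing of Fγ₁ ∘ λ₁ and Fγ₂ ∘ λ₂. -/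
/-!
Each `γᵢ` is the fold of the free `Sᵢ`-algebra into `T12` restricted along `iᵢ`; it is natural
because both `Tᵢ f ≫ γᵢ` and `γᵢ ≫ T12 f` solve the same initiality problem. The specification
on `S12` is then the objectwise copairing of the natural transformations `F γᵢ ∘ lamᵢ`, which is
natural by uniqueness of copairings.
-/

open CategoryTheory

section FreeAlgebraFold

variable {C : Type*} [Category C] {S T U : C ⥤ C} {η : 𝟭 C ⟶ T} {κ : T ⋙ S ⟶ T}

theorem fold_naturality
    (hT : ∀ (X A : C) (a : X ⟶ A) (k : S.obj A ⟶ A),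
      ∃! h : T.obj X ⟶ A, η.app X ≫ h = a ∧ κ.app X ≫ h = S.map h ≫ k)
    (η' : 𝟭 C ⟶ U) (k : U ⋙ S ⟶ U) (γ : ∀ X : C, T.obj X ⟶ U.obj X)
    (hγ : ∀ X : C, η.app X ≫ γ X = η'.app X ∧ κ.app X ≫ γ X = S.map (γ X) ≫ k.app X)
    {X Y : C} (f : X ⟶ Y) :
    T.map f ≫ γ Y = γ X ≫ U.map f := by
  have hη := η.naturality f
  have hκ := κ.naturality f
  have hη' := η'.naturality f
  have hk := k.naturality f
  simp only [Functor.id_map, Functor.comp_map, Functor.id_obj, Functor.comp_obj] at hη hκ hη' hk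
  refine (hT X (U.obj Y) (f ≫ η'.app Y) (k.app Y)).unique ⟨?_, ?_⟩ ⟨?_, ?_⟩
  · rw [← Category.assoc, ← hη, Category.assoc, (hγ Y).1]
  · rw [← Category.assoc, ← hκ, Category.assoc, (hγ Y).2, ← Category.assoc, ← S.map_comp]
  · rw [← Category.assoc, (hγ X).1, hη']
  · rw [← Category.assoc, (hγ X).2, Category.assoc, ← hk, ← Category.assoc, ← S.map_comp]

theorem exists_natTrans_fold
    (hT : ∀ (X A : C) (a : X ⟶ A) (k : S.obj A ⟶ A),
      ∃! h : T.obj X ⟶ A, η.app X ≫ h = a ∧ κ.app X ≫ h = S.map h ≫ k)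
    (η' : 𝟭 C ⟶ U) (k : U ⋙ S ⟶ U) :
    ∃ γ : T ⟶ U, ∀ X : C,
      η.app X ≫ γ.app X = η'.app X ∧ κ.app X ≫ γ.app X = S.map (γ.app X) ≫ k.app X := by
  choose γ hγ _ using fun X => hT X (U.obj X) (η'.app X) (k.app X)
  exact ⟨⟨γ, fun _ _ f => fold_naturality hT η' k γ hγ f⟩, hγ⟩

end FreeAlgebraFold

theorem exists_copair_natTrans {C D : Type*} [Category C] [Category D] {P Q R H : C ⥤ D}
    (i1 : P ⟶ R) (i2 : Q ⟶ R)
    (hR : ∀ (X : C) (A : D) (f : P.obj X ⟶ A) (g : Q.obj X ⟶ A),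
      ∃! h : R.obj X ⟶ A, i1.app X ≫ h = f ∧ i2.app X ≫ h = g)
    (α : P ⟶ H) (β : Q ⟶ H) :
    ∃ δ : R ⟶ H, i1 ≫ δ = α ∧ i2 ≫ δ = β := by
  choose δ hδ _ using fun X => hR X (H.obj X) (α.app X) (β.app X)
  refine ⟨⟨δ, fun X Y f => ?_⟩, NatTrans.ext (funext fun X => (hδ X).1),
    NatTrans.ext (funext fun X => (hδ X).2)⟩
  refine (hR X (H.obj Y) (α.app X ≫ H.map f) (β.app X ≫ H.map f)).unique ⟨?_, ?_⟩ ⟨?_, ?_⟩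
  · rw [← Category.assoc, ← i1.naturality, Category.assoc, (hδ Y).1, α.naturality]
  · rw [← Category.assoc, ← i2.naturality, Category.assoc, (hδ Y).2, β.naturality]
  · rw [← Category.assoc, (hδ X).1]
  · rw [← Category.assoc, (hδ X).2]

theorem coproduct_of_GSOS_specifications_general
    {C : Type*} [Category C]
    (S1 S2 S12 F T1 T2 T12 : C ⥤ C)
    (i1 : S1 ⟶ S12) (i2 : S2 ⟶ S12)
    (hcoprod : ∀ (X A : C) (f : S1.obj X ⟶ A) (g : S2.obj X ⟶ A),
      ∃! h : S12.obj X ⟶ A, i1.app X ≫ h = f ∧ i2.app X ≫ h = g)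
    (η1 : 𝟭 C ⟶ T1) (κ1 : T1 ⋙ S1 ⟶ T1)
    (η2 : 𝟭 C ⟶ T2) (κ2 : T2 ⋙ S2 ⟶ T2)
    (η12 : 𝟭 C ⟶ T12) (κ12 : T12 ⋙ S12 ⟶ T12)
    (hinit1 : ∀ (X A : C) (a : X ⟶ A) (k : S1.obj A ⟶ A),
      ∃! h : T1.obj X ⟶ A, η1.app X ≫ h = a ∧ κ1.app X ≫ h = S1.map h ≫ k)
    (hinit2 : ∀ (X A : C) (a : X ⟶ A) (k : S2.obj A ⟶ A),
      ∃! h : T2.obj X ⟶ A, η2.app X ≫ h = a ∧ κ2.app X ≫ h = S2.map h ≫ k)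
    (lam1 : F ⋙ S1 ⟶ T1 ⋙ F) (lam2 : F ⋙ S2 ⟶ T2 ⋙ F) :
    ∃ (γ1 : ∀ X : C, T1.obj X ⟶ T12.obj X) (γ2 : ∀ X : C, T2.obj X ⟶ T12.obj X)
      (lam : F ⋙ S12 ⟶ T12 ⋙ F),
      -- γ1, γ2 are the canonical maps induced by initiality
      (∀ X : C, η1.app X ≫ γ1 X = η12.app X ∧
        κ1.app X ≫ γ1 X = S1.map (γ1 X) ≫ (i1.app (T12.obj X) ≫ κ12.app X)) ∧
      (∀ X : C, η2.app X ≫ γ2 X = η12.app X ∧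
        κ2.app X ≫ γ2 X = S2.map (γ2 X) ≫ (i2.app (T12.obj X) ≫ κ12.app X)) ∧
      -- lam is the copairing of F γ1 ∘ lam1 and F γ2 ∘ lam2
      (∀ X : C, i1.app (F.obj X) ≫ lam.app X = lam1.app X ≫ F.map (γ1 X)) ∧
      (∀ X : C, i2.app (F.obj X) ≫ lam.app X = lam2.app X ≫ F.map (γ2 X)) := by
  obtain ⟨γ1, hγ1⟩ := exists_natTrans_fold hinit1 η12 (Functor.whiskerLeft T12 i1 ≫ κ12)
  obtain ⟨γ2, hγ2⟩ := exists_natTrans_fold hinit2 η12 (Functor.whiskerLeft T12 i2 ≫ κ12)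
  obtain ⟨lam, hlam1, hlam2⟩ :=
    exists_copair_natTrans (Functor.whiskerLeft F i1) (Functor.whiskerLeft F i2)
      (fun X => hcoprod (F.obj X)) (lam1 ≫ Functor.whiskerRight γ1 F)
      (lam2 ≫ Functor.whiskerRight γ2 F)
  exact ⟨γ1.app, γ2.app, lam, hγ1, hγ2, NatTrans.congr_app hlam1, NatTrans.congr_app hlam2⟩

/-- Coproduct of GSOS specifications. Given syntax functors `S1`, `S2` with free
monads `T1`, `T2` (expressed via the universal property of initial `(X + Sᵢ)`-algebras),
a functor `S12` which is objectwise the coproduct `S1 + S2` with injections `i1`, `i2`,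
its free monad `T12`, and GSOS specifications `lam1 : S1 F ⇒ F T1`, `lam2 : S2 F ⇒ F T2`,
there is a GSOS specification `lam : S12 F ⇒ F T12` obtained, via the canonical
monad morphisms `γᵢ : Tᵢ ⇒ T12` induced by initiality, as the copairing of
`F γ1 ∘ lam1` and `F γ2 ∘ lam2`. -/
theorem coproduct_of_GSOS_specifications
    {C : Type*} [Category C]
    (S1 S2 S12 F T1 T2 T12 : C ⥤ C)
    (i1 : S1 ⟶ S12) (i2 : S2 ⟶ S12)
    (hcoprod : ∀ (X A : C) (f : S1.obj X ⟶ A) (g : S2.obj X ⟶ A),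
      ∃! h : S12.obj X ⟶ A, i1.app X ≫ h = f ∧ i2.app X ≫ h = g)
    (η1 : 𝟭 C ⟶ T1) (κ1 : T1 ⋙ S1 ⟶ T1)
    (η2 : 𝟭 C ⟶ T2) (κ2 : T2 ⋙ S2 ⟶ T2)
    (η12 : 𝟭 C ⟶ T12) (κ12 : T12 ⋙ S12 ⟶ T12)
    (hinit1 : ∀ (X A : C) (a : X ⟶ A) (k : S1.obj A ⟶ A),
      ∃! h : T1.obj X ⟶ A, η1.app X ≫ h = a ∧ κ1.app X ≫ h = S1.map h ≫ k)
    (hinit2 : ∀ (X A : C) (a : X ⟶ A) (k : S2.obj A ⟶ A),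
      ∃! h : T2.obj X ⟶ A, η2.app X ≫ h = a ∧ κ2.app X ≫ h = S2.map h ≫ k)
    (hinit12 : ∀ (X A : C) (a : X ⟶ A) (k : S12.obj A ⟶ A),
      ∃! h : T12.obj X ⟶ A, η12.app X ≫ h = a ∧ κ12.app X ≫ h = S12.map h ≫ k)
    (lam1 : F ⋙ S1 ⟶ T1 ⋙ F) (lam2 : F ⋙ S2 ⟶ T2 ⋙ F) :
    ∃ (γ1 : ∀ X : C, T1.obj X ⟶ T12.obj X) (γ2 : ∀ X : C, T2.obj X ⟶ T12.obj X)
      (lam : F ⋙ S12 ⟶ T12 ⋙ F),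
      -- γ1, γ2 are the canonical maps induced by initiality
      (∀ X : C, η1.app X ≫ γ1 X = η12.app X ∧
        κ1.app X ≫ γ1 X = S1.map (γ1 X) ≫ (i1.app (T12.obj X) ≫ κ12.app X)) ∧
      (∀ X : C, η2.app X ≫ γ2 X = η12.app X ∧
        κ2.app X ≫ γ2 X = S2.map (γ2 X) ≫ (i2.app (T12.obj X) ≫ κ12.app X)) ∧
      -- lam is the copairing of F γ1 ∘ lam1 and F γ2 ∘ lam2
      (∀ X : C, i1.app (F.obj X) ≫ lam.app X = lam1.app X ≫ F.map (γ1 X)) ∧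
      (∀ X : C, i2.app (F.obj X) ≫ lam.app X = lam2.app X ≫ F.map (γ2 X)) :=
  coproduct_of_GSOS_specifications_general S1 S2 S12 F T1 T2 T12 i1 i2 hcoprod η1 κ1 η2 κ2 η12 κ12
    hinit1 hinit2 lam1 lam2
end

section
/- The copy/delete GSOS interpretation of the comonoid is incompatible with naturality in the sense of Lawvere theories: let d : 0 → 1 be a generator with exactly the transitions d ⟶^{ε/a} d and d ⟶^{ε/b} d (a ≠ b). Then under the prop derivation rules together with the black comonoid rules (δ ⟶^{k / kk} δ), the term d ⨟ δ has exactly the transitions with output labels aa and bb, while d ⊗ d additionally has transitions with output labels ab and ba; hence the transition sets of d ⨟ δ and d ⊗ d (as required equal by comonoid naturality d ⨟ δ = d ⊗ d) differ. -/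
/-! Both transition rules distribute over unions of transition sets, so each side is computed
from the singletons.  The comonoid copies the one label that `d` chose, while `d ⊗ d` lets the
two copies choose independently; the mixed output `ab` therefore occurs only in `d ⊗ d`. -/

/-- Transitions of a closed diagram of sort `(n,m)` over a label alphabet `A`:
pairs of an input word (length `n`) and an output word (length `m`).  Since the
terms involved only have self-loop transitions, we record just the label pairs. -/
abbrev Transitions (A : Type) := Set (List A × List A)

/-- Transitions of the generator `d : 0 → 1`, with exactly `d ⟶^{ε/a} d` and
`d ⟶^{ε/b} d`. -/
def Td {A : Type} (a b : A) : Transitions A := {([], [a]), ([], [b])}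

/-- Transitions of the black comonoid `δ : 1 → 2`: `δ ⟶^{k/kk} δ` for every `k`. -/
def Tdelta (A : Type) : Transitions A := {p | ∃ k : A, p = ([k], [k, k])}

/-- The sequential-composition rule on transition sets: matching middle labels. -/
def seqT {A : Type} (S T : Transitions A) : Transitions A :=
  {p | ∃ u v w, (u, v) ∈ S ∧ (v, w) ∈ T ∧ p = (u, w)}

/-- The monoidal-product rule on transition sets: componentwise concatenation. -/
def tenT {A : Type} (S T : Transitions A) : Transitions A :=
  {p | ∃ u₁ w₁ u₂ w₂, (u₁, w₁) ∈ S ∧ (u₂, w₂) ∈ T ∧ p = (u₁ ++ u₂, w₁ ++ w₂)}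

section TransitionCalculus

variable {A : Type}

theorem seqT_insert_left (p : List A × List A) (S T : Transitions A) :
    seqT (insert p S) T = seqT {p} T ∪ seqT S T := by
  ext q
  simp only [seqT, Set.mem_ofPred_eq, Set.mem_union, Set.mem_insert_iff, Set.mem_singleton_iff,
    or_and_right, exists_or]

theorem seqT_singleton_Tdelta (u : List A) (k : A) :
    seqT {(u, [k])} (Tdelta A) = {(u, [k, k])} := by
  ext q
  simp only [seqT, Tdelta, Set.mem_ofPred_eq, Set.mem_singleton_iff, Prod.mk.injEq]
  constructor
  · rintro ⟨_, _, _, ⟨rfl, rfl⟩, ⟨k', hk', rfl⟩, rfl⟩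
    simp_all
  · rintro rfl
    exact ⟨u, [k], [k, k], ⟨rfl, rfl⟩, ⟨k, rfl, rfl⟩, rfl⟩

theorem tenT_insert_left (p : List A × List A) (S T : Transitions A) :
    tenT (insert p S) T = tenT {p} T ∪ tenT S T := by
  ext q
  simp only [tenT, Set.mem_ofPred_eq, Set.mem_union, Set.mem_insert_iff, Set.mem_singleton_iff,
    or_and_right, exists_or]

theorem tenT_insert_right (p : List A × List A) (S T : Transitions A) :
    tenT S (insert p T) = tenT S {p} ∪ tenT S T := by
  ext q
  simp only [tenT, Set.mem_ofPred_eq, Set.mem_union, Set.mem_insert_iff, Set.mem_singleton_iff,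
    or_and_right, and_or_left, exists_or]

theorem tenT_singleton_singleton (p q : List A × List A) :
    tenT {p} {q} = {(p.1 ++ q.1, p.2 ++ q.2)} := by
  ext r
  simp only [tenT, Set.mem_ofPred_eq, Set.mem_singleton_iff]
  constructor
  · rintro ⟨_, _, _, _, rfl, rfl, rfl⟩
    rfl
  · rintro rfl
    exact ⟨p.1, p.2, q.1, q.2, rfl, rfl, rfl⟩

end TransitionCalculus

theorem seqT_Td_Tdelta {A : Type} (a b : A) :
    seqT (Td a b) (Tdelta A) = {([], [a, a]), ([], [b, b])} := by
  rw [Td, seqT_insert_left, seqT_singleton_Tdelta, seqT_singleton_Tdelta, Set.singleton_union]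

theorem tenT_Td_Td {A : Type} (a b : A) :
    tenT (Td a b) (Td a b) =
      {([], [a, a]), ([], [a, b]), ([], [b, a]), ([], [b, b])} := by
  rw [Td, tenT_insert_left, tenT_insert_right, tenT_insert_right]
  simp only [tenT_singleton_singleton, List.nil_append, List.singleton_append,
    Set.singleton_union, Set.insert_union]

/-- The copy interpretation of the comonoid is incompatible with naturality:
for a generator `d : 0 → 1` with transitions `ε/a` and `ε/b` (`a ≠ b`), the term
`d ⨟ δ` has exactly the transitions with outputs `aa`, `bb`, while `d ⊗ d`
additionally has outputs `ab` and `ba`; hence their transition sets differ, so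
comonoid naturality `d ⨟ δ = d ⊗ d` fails to be compositional. -/
theorem comonoid_naturality_fails {A : Type} (a b : A) (hab : a ≠ b) :
    seqT (Td a b) (Tdelta A) = {([], [a, a]), ([], [b, b])} ∧
    tenT (Td a b) (Td a b) =
      {([], [a, a]), ([], [a, b]), ([], [b, a]), ([], [b, b])} ∧
    seqT (Td a b) (Tdelta A) ≠ tenT (Td a b) (Td a b) := by
  refine ⟨seqT_Td_Tdelta a b, tenT_Td_Td a b, fun h => ?_⟩
  have hab_mem : (([], [a, b]) : List A × List A) ∈ seqT (Td a b) (Tdelta A) := by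
    rw [h, tenT_Td_Td]
    simp
  rw [seqT_Td_Tdelta] at hab_mem
  simp [hab, hab.symm] at hab_mem
end
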